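/- arXiv:2503.16933 — 5 statements merged into one kernel-verified Lean document; each statement's English description precedes it below -/
import Mathlib

section
/- Let T be a 2-isometry on a complex Hilbert space H. Then T*T is an invertible bounded operator on H, and the operator L := (T*T)⁻¹T* is a left inverse of T, i.e. L∘T = I; in particular T is left-invertible. -/
/-!
For a 2-isometry `T` and any `h`, the sequence `n ↦ ‖Tⁿ h‖²` has vanishing second differences,
so it is an arithmetic progression; being nonnegative, it cannot decrease, whence
`‖h‖ ≤ ‖T h‖`. Thus `T* T ≥ 1` in the Loewner order, and an operator dominating a strictly
positive one is invertible in a C⋆-algebra. The left inverse is then just associativity.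
-/

open ContinuousLinearMap

lemma eq_add_mul_of_second_diff_eq_zero {a : ℕ → ℝ}
    (ha : ∀ n, a (n + 2) - 2 * a (n + 1) + a n = 0) (n : ℕ) :
    a n = a 0 + n * (a 1 - a 0) := by
  induction n using Nat.twoStepInduction with
  | zero => simp
  | one => simp
  | more n ih₀ ih₁ =>
    have := ha n
    push_cast at ih₁ ⊢
    linarith

lemma nonneg_of_forall_add_mul_nonneg {c d : ℝ} (h : ∀ n : ℕ, 0 ≤ c + n * d) : 0 ≤ d := by
  by_contra! hd
  obtain ⟨n, hn⟩ := exists_nat_gt (c / -d)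
  rw [div_lt_iff₀ (neg_pos.2 hd)] at hn
  linarith [h n]

def IsTwoIsometry {E : Type*} [Norm E] (f : E → E) : Prop :=
  ∀ x, ‖f (f x)‖ ^ 2 - 2 * ‖f x‖ ^ 2 + ‖x‖ ^ 2 = 0

lemma IsTwoIsometry.norm_le_norm_apply {E : Type*} [SeminormedAddGroup E] {f : E → E}
    (hf : IsTwoIsometry f) (x : E) : ‖x‖ ≤ ‖f x‖ := by
  set a : ℕ → ℝ := fun n ↦ ‖f^[n] x‖ ^ 2
  have ha : ∀ n, a (n + 2) - 2 * a (n + 1) + a n = 0 := fun n ↦ by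
    simpa only [a, Function.iterate_succ_apply'] using hf (f^[n] x)
  have hslope : 0 ≤ a 1 - a 0 := nonneg_of_forall_add_mul_nonneg fun n ↦ by
    rw [← eq_add_mul_of_second_diff_eq_zero ha n]
    positivity
  have : ‖x‖ ^ 2 ≤ ‖f x‖ ^ 2 := by simpa [a] using hslope
  exact (pow_le_pow_iff_left₀ (norm_nonneg _) (norm_nonneg _) two_ne_zero).1 this

lemma one_le_adjoint_comp_self_of_norm_le {𝕜 E F : Type*} [RCLike 𝕜]
    [NormedAddCommGroup E] [InnerProductSpace 𝕜 E] [CompleteSpace E]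
    [NormedAddCommGroup F] [InnerProductSpace 𝕜 F] [CompleteSpace F]
    {T : E →L[𝕜] F} (hT : ∀ x, ‖x‖ ≤ ‖T x‖) : 1 ≤ adjoint T ∘L T := by
  rw [le_def, isPositive_def']
  refine ⟨(isPositive_adjoint_comp_self T).isSelfAdjoint.sub (.one _), fun x ↦ ?_⟩
  have hsq : ‖x‖ ^ 2 ≤ ‖T x‖ ^ 2 := by gcongr; exact hT x
  rw [apply_norm_sq_eq_inner_adjoint_left, ← inner_self_eq_norm_sq (𝕜 := 𝕜)] at hsq
  simpa [reApplyInnerSelf, inner_sub_left] using hsq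

/-- For a 2-isometry `T`, the operator `T*T` is invertible and
`L := (T*T)⁻¹ T*` is a left inverse of `T`. -/
theorem twoIsometry_adjoint_mul_self_isUnit_and_leftInverse
    {H : Type*} [NormedAddCommGroup H] [InnerProductSpace ℂ H] [CompleteSpace H]
    (T : H →L[ℂ] H)
    (h2iso : ∀ h : H, ‖T (T h)‖ ^ 2 - 2 * ‖T h‖ ^ 2 + ‖h‖ ^ 2 = 0) :
    IsUnit (adjoint T ∘L T) ∧
      ∀ R : H →L[ℂ] H, R ∘L (adjoint T ∘L T) = 1 → (adjoint T ∘L T) ∘L R = 1 →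
        (R ∘L adjoint T) ∘L T = 1 := by
  have hexp : ∀ h, ‖h‖ ≤ ‖T h‖ := IsTwoIsometry.norm_le_norm_apply (f := T) h2iso
  refine ⟨CStarAlgebra.isUnit_of_le 1 (one_le_adjoint_comp_self_of_norm_le hexp)
    isStrictlyPositive_one, fun R hR _ ↦ ?_⟩
  rwa [comp_assoc]
end

section
/- Let T be a bounded linear operator on a complex Hilbert space H which is concave, i.e. ‖T²h‖² − 2‖Th‖² + ‖h‖² ≤ 0 for all h ∈ H, and analytic, i.e. ⋂_{n≥0} Tⁿ(H) = {0}. Then E_T := (range T)ᗮ is a wandering subspace for T, and H equals the closed linear span of ⋃_{n≥0} Tⁿ(E_T); that is, T has the wandering subspace property. -/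
open ContinuousLinearMap
open scoped ComplexInnerProductSpace

/-!
Concavity says that `n ↦ ‖Tⁿx‖²` has nonincreasing increments, so
`‖Tⁿx‖² ≤ ‖x‖² + n (‖Tx‖² - ‖x‖²)`; in particular `T` is expanding and every `Tⁿ` has closed
range. Choose `L` with `x - TLx ⟂ range T`. For `g` orthogonal to every `Tⁿ(E_T)`, the telescoping
sum `g - TⁿLⁿg = ∑_{k<n} Tᵏ(Lᵏg - TLᵏ⁺¹g)` gives `⟪g, TⁿLⁿg⟫ = ‖g‖²`. Since `‖Lⁿg‖²` decreases,
its increments are summable, so infinitely often `n` times the increment is at most `1`, and the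
growth estimate then keeps `TⁿLⁿg` bounded along those `n`. These vectors lie in ever deeper
ranges `range Tᵐ`, while by analyticity `g` is approximated by vectors orthogonal to some
`range Tᵐ`; hence `‖g‖² = ⟪g, TⁿLⁿg⟫` is arbitrarily small.
-/

open Filter
open scoped InnerProductSpace

theorem Summable.frequently_add_one_mul_le_one {a : ℕ → ℝ} (ha : Summable a) :
    ∃ᶠ n : ℕ in atTop, ((n : ℝ) + 1) * a n ≤ 1 := by
  intro hlarge
  have hharmonic : Summable fun n : ℕ => 1 / ((n : ℝ) + 1) := by
    refine ha.of_norm_bounded_eventually_nat (hlarge.mono fun n hn => ?_)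
    rw [Real.norm_of_nonneg (by positivity), div_le_iff₀ (by positivity)]
    linarith [not_le.1 hn]
  exact Real.not_summable_one_div_natCast
    ((summable_nat_add_iff 1).1 (by exact_mod_cast hharmonic))

namespace Submodule

variable {𝕜 E : Type*} [RCLike 𝕜] [NormedAddCommGroup E] [InnerProductSpace 𝕜 E]

theorem norm_le_of_sub_mem_orthogonal {K : Submodule 𝕜 E} {x u : E} (hu : u ∈ K)
    (hxu : x - u ∈ Kᗮ) : ‖u‖ ≤ ‖x‖ := by
  have h := norm_add_sq_eq_norm_sq_add_norm_sq_of_inner_eq_zero u (x - u)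
    (inner_right_of_mem_orthogonal hu hxu)
  rw [add_sub_cancel] at h
  nlinarith [norm_nonneg u, norm_nonneg x, mul_self_nonneg ‖x - u‖]

variable [CompleteSpace E]

theorem topologicalClosure_iSup_orthogonal_eq_top {ι : Type*} {V : ι → Submodule 𝕜 E}
    (hV : ∀ i, IsClosed (V i : Set E)) (hbot : ⨅ i, V i = ⊥) :
    (⨆ i, (V i)ᗮ).topologicalClosure = ⊤ := by
  rw [topologicalClosure_eq_top_iff, ← iInf_orthogonal]
  simpa only [orthogonal_orthogonal_eq_closure, (hV _).submodule_topologicalClosure_eq] using hbot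

theorem eq_zero_of_forall_exists_inner_eq {V : ℕ → Submodule 𝕜 E} (hanti : Antitone V)
    (hV : ∀ n, IsClosed (V n : Set E)) (hbot : ⨅ n, V n = ⊥) {g : E} {C : ℝ}
    (hg : ∀ m, ∃ r ∈ V m, ‖r‖ ≤ C ∧ ⟪g, r⟫_𝕜 = ⟪g, g⟫_𝕜) : g = 0 := by
  have hdense : g ∈ (⨆ n, (V n)ᗮ).topologicalClosure := by
    rw [topologicalClosure_iSup_orthogonal_eq_top hV hbot]
    exact mem_top
  have hdirected : Directed (· ≤ ·) fun n => (V n)ᗮ :=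
    Monotone.directed_le fun m n hmn => orthogonal_le (hanti hmn)
  have hsmall : ∀ ε > 0, ‖g‖ ^ 2 ≤ ε * C := by
    intro ε hε
    obtain ⟨s, hs, hgs⟩ := Metric.mem_closure_iff.1 hdense ε hε
    obtain ⟨m, hsm⟩ := (mem_iSup_of_directed _ hdirected).1 hs
    obtain ⟨r, hr, hrC, hgr⟩ := hg m
    have hpair : ⟪g - s, r⟫_𝕜 = ⟪g, g⟫_𝕜 := by
      rw [inner_sub_left, inner_left_of_mem_orthogonal hr hsm, sub_zero, hgr]
    calc ‖g‖ ^ 2 = ‖⟪g - s, r⟫_𝕜‖ := by rw [hpair, inner_self_eq_norm_sq_to_K]; simp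
      _ ≤ ‖g - s‖ * ‖r‖ := norm_inner_le_norm _ _
      _ ≤ ε * C := by
        rw [← dist_eq_norm]
        exact mul_le_mul hgs.le hrC (norm_nonneg r) hε.le
  have hC : 0 ≤ C := by
    obtain ⟨r, -, hrC, -⟩ := hg 0
    exact (norm_nonneg r).trans hrC
  have hg_sq : ‖g‖ ^ 2 ≤ 0 := le_of_forall_pos_le_add fun ε hε => by
    have := hsmall (ε / (C + 1)) (by positivity)
    rw [div_mul_eq_mul_div, le_div_iff₀ (by positivity)] at this
    nlinarith
  simpa using hg_sq

end Submodule

namespace ContinuousLinearMap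

section Concave

variable {𝕜 E : Type*} [NormedField 𝕜] [NormedAddCommGroup E] [NormedSpace 𝕜 E]

def IsConcave (T : E →L[𝕜] E) : Prop :=
  ∀ h : E, ‖T (T h)‖ ^ 2 - 2 * ‖T h‖ ^ 2 + ‖h‖ ^ 2 ≤ 0

variable {T : E →L[𝕜] E}

theorem IsConcave.norm_pow_succ_apply_sq_sub_le (hT : T.IsConcave) (x : E) (n : ℕ) :
    ‖(T ^ (n + 1)) x‖ ^ 2 - ‖(T ^ n) x‖ ^ 2 ≤ ‖T x‖ ^ 2 - ‖x‖ ^ 2 := by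
  induction n with
  | zero => simp
  | succ n ih =>
    simp only [pow_succ', mul_apply_eq_comp] at ih ⊢
    linarith [hT ((T ^ n) x)]

theorem IsConcave.norm_pow_apply_sq_le (hT : T.IsConcave) (x : E) (n : ℕ) :
    ‖(T ^ n) x‖ ^ 2 ≤ ‖x‖ ^ 2 + n * (‖T x‖ ^ 2 - ‖x‖ ^ 2) := by
  induction n with
  | zero => simp
  | succ n ih =>
    rw [Nat.cast_succ]
    linarith [hT.norm_pow_succ_apply_sq_sub_le x n]

theorem IsConcave.norm_le_norm_apply (hT : T.IsConcave) (x : E) : ‖x‖ ≤ ‖T x‖ := by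
  by_contra! hlt
  have hd : 0 < ‖x‖ ^ 2 - ‖T x‖ ^ 2 := by nlinarith [norm_nonneg (T x)]
  obtain ⟨n, hn⟩ := exists_nat_gt (‖x‖ ^ 2 / (‖x‖ ^ 2 - ‖T x‖ ^ 2))
  rw [div_lt_iff₀ hd] at hn
  nlinarith [hT.norm_pow_apply_sq_le x n, sq_nonneg ‖(T ^ n) x‖]

theorem IsConcave.norm_le_norm_pow_apply (hT : T.IsConcave) (n : ℕ) (x : E) :
    ‖x‖ ≤ ‖(T ^ n) x‖ := by
  induction n with
  | zero => simp
  | succ n ih =>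
    rw [pow_succ', mul_apply_eq_comp]
    exact ih.trans (hT.norm_le_norm_apply _)

end Concave

theorem antitone_range_pow {R M : Type*} [Semiring R] [AddCommMonoid M] [TopologicalSpace M]
    [Module R M] (T : M →L[R] M) :
    Antitone fun n : ℕ => LinearMap.range ((T ^ n : M →L[R] M) : M →ₗ[R] M) := by
  intro m n hmn _ ⟨y, hy⟩
  refine ⟨(T ^ (n - m)) y, ?_⟩
  rw [← hy, coe_coe, coe_coe, ← mul_apply_eq_comp, ← pow_add, Nat.add_sub_cancel' hmn]

theorem isClosed_range_of_norm_le_norm_apply {𝕜 E F : Type*} [NormedField 𝕜]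
    [NormedAddCommGroup E] [NormedSpace 𝕜 E] [CompleteSpace E]
    [NormedAddCommGroup F] [NormedSpace 𝕜 F] {T : E →L[𝕜] F} (hT : ∀ x, ‖x‖ ≤ ‖T x‖) :
    IsClosed (LinearMap.range (T : E →ₗ[𝕜] F) : Set F) :=
  (T.antilipschitz_of_bound (K := 1) (by simpa using hT)).isClosed_range T.uniformContinuous

section InnerProduct

variable {𝕜 E : Type*} [RCLike 𝕜] [NormedAddCommGroup E] [InnerProductSpace 𝕜 E]

theorem inner_pow_apply_eq_zero_of_mem_orthogonal_range (T : E →L[𝕜] E) {n : ℕ} (hn : 1 ≤ n)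
    {x : E} (hx : x ∈ (LinearMap.range (T : E →ₗ[𝕜] E))ᗮ) (y : E) : ⟪x, (T ^ n) y⟫_𝕜 = 0 := by
  obtain ⟨k, rfl⟩ := Nat.exists_eq_add_of_le' hn
  rw [pow_succ', mul_apply_eq_comp]
  exact Submodule.inner_left_of_mem_orthogonal (LinearMap.mem_range_self _ _) hx

theorem sub_pow_apply_iterate_mem_iSup_map_pow (T : E →L[𝕜] E) {L : E → E}
    (hL : ∀ x, x - T (L x) ∈ (LinearMap.range (T : E →ₗ[𝕜] E))ᗮ) (g : E) (n : ℕ) :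
    g - (T ^ n) (L^[n] g) ∈
      ⨆ k : ℕ, (LinearMap.range (T : E →ₗ[𝕜] E))ᗮ.map ((T ^ k : E →L[𝕜] E) : E →ₗ[𝕜] E) := by
  induction n with
  | zero => simp
  | succ n ih =>
    have htelescope : g - (T ^ (n + 1)) (L^[n + 1] g) =
        (g - (T ^ n) (L^[n] g)) + (T ^ n) (L^[n] g - T (L (L^[n] g))) := by
      rw [Function.iterate_succ_apply', pow_succ, mul_apply_eq_comp, map_sub]
      abel
    rw [htelescope]
    exact add_mem ih (Submodule.mem_iSup_of_mem n (Submodule.mem_map_of_mem (hL _)))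

theorem exists_sub_apply_mem_orthogonal_range {F : Type*} [NormedAddCommGroup F]
    [NormedSpace 𝕜 F] [CompleteSpace E] {T : F →L[𝕜] E}
    (hT : IsClosed (LinearMap.range (T : F →ₗ[𝕜] E) : Set E)) (x : E) :
    ∃ y, x - T y ∈ (LinearMap.range (T : F →ₗ[𝕜] E))ᗮ := by
  have : CompleteSpace (LinearMap.range (T : F →ₗ[𝕜] E)) := hT.completeSpace_coe
  obtain ⟨_, ⟨y, rfl⟩, z, hz, rfl⟩ := Submodule.exists_add_mem_mem_orthogonal
    (K := LinearMap.range (T : F →ₗ[𝕜] E)) x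
  exact ⟨y, by simpa using hz⟩

theorem IsConcave.frequently_norm_pow_apply_iterate_sq_le {T : E →L[𝕜] E} (hT : T.IsConcave)
    {L : E → E} (hL : ∀ x, x - T (L x) ∈ (LinearMap.range (T : E →ₗ[𝕜] E))ᗮ) (g : E) :
    ∃ᶠ n : ℕ in atTop, ‖(T ^ n) (L^[n] g)‖ ^ 2 ≤ ‖g‖ ^ 2 + 1 := by
  set t : ℕ → ℝ := fun n => ‖L^[n] g‖ ^ 2
  have hTL : ∀ n, ‖T (L^[n + 1] g)‖ ^ 2 ≤ t n := fun n => by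
    rw [Function.iterate_succ_apply']
    exact pow_le_pow_left₀ (norm_nonneg _)
      (Submodule.norm_le_of_sub_mem_orthogonal (LinearMap.mem_range_self _ _) (hL _)) 2
  have hanti : Antitone t := antitone_nat_of_succ_le fun n =>
    (pow_le_pow_left₀ (norm_nonneg _) (hT.norm_le_norm_apply _) 2).trans (hTL n)
  have hsum : Summable fun n => t n - t (n + 1) :=
    summable_of_sum_range_le (c := t 0) (fun n => sub_nonneg.2 (hanti n.le_succ)) fun n => by
      rw [Finset.sum_range_sub']
      linarith [sq_nonneg ‖L^[n] g‖]
  refine (tendsto_add_atTop_nat 1).frequently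
    (hsum.frequently_add_one_mul_le_one.mono fun n hn => ?_)
  calc ‖(T ^ (n + 1)) (L^[n + 1] g)‖ ^ 2
      ≤ t (n + 1) + ((n : ℝ) + 1) * (‖T (L^[n + 1] g)‖ ^ 2 - t (n + 1)) := by
        simpa only [Nat.cast_succ] using hT.norm_pow_apply_sq_le (L^[n + 1] g) (n + 1)
    _ ≤ t (n + 1) + ((n : ℝ) + 1) * (t n - t (n + 1)) := by gcongr; exact hTL n
    _ ≤ t 0 + 1 := by linarith [hanti (Nat.zero_le (n + 1))]

end InnerProduct

end ContinuousLinearMap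

/-- **Richter.** An analytic concave operator has the wandering
subspace property, with wandering subspace `E_T = (range T)ᗮ`. -/
theorem analytic_concave_wandering_subspace_property
    {H : Type*} [NormedAddCommGroup H] [InnerProductSpace ℂ H] [CompleteSpace H]
    (T : H →L[ℂ] H)
    (hconcave : ∀ h : H, ‖T (T h)‖ ^ 2 - 2 * ‖T h‖ ^ 2 + ‖h‖ ^ 2 ≤ 0)
    (hanalytic : (⨅ n : ℕ, LinearMap.range ((T ^ n : H →L[ℂ] H) : H →ₗ[ℂ] H)) = ⊥) :
    (∀ n : ℕ, 1 ≤ n → ∀ x ∈ (LinearMap.range (T : H →ₗ[ℂ] H))ᗮ, ∀ y ∈ (LinearMap.range (T : H →ₗ[ℂ] H))ᗮ,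
        ⟪x, (T ^ n) y⟫ = 0) ∧
    (⨆ n : ℕ, ((LinearMap.range (T : H →ₗ[ℂ] H))ᗮ).map ((T ^ n : H →L[ℂ] H) : H →ₗ[ℂ] H)).topologicalClosure = ⊤ := by
  have hT : T.IsConcave := hconcave
  refine ⟨fun n hn x hx y _ => inner_pow_apply_eq_zero_of_mem_orthogonal_range T hn hx y, ?_⟩
  rw [Submodule.topologicalClosure_eq_top_iff, Submodule.eq_bot_iff]
  intro g hg
  choose L hL using exists_sub_apply_mem_orthogonal_range
    (isClosed_range_of_norm_le_norm_apply hT.norm_le_norm_apply)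
  refine Submodule.eq_zero_of_forall_exists_inner_eq (antitone_range_pow T)
    (fun n => isClosed_range_of_norm_le_norm_apply (hT.norm_le_norm_pow_apply n)) hanalytic
    (C := ‖g‖ + 1) fun m => ?_
  obtain ⟨n, hmn, hn⟩ := frequently_atTop.1 (hT.frequently_norm_pow_apply_iterate_sq_le hL g) m
  refine ⟨(T ^ n) (L^[n] g), antitone_range_pow T hmn ⟨_, rfl⟩, ?_, ?_⟩
  · nlinarith [norm_nonneg g, norm_nonneg ((T ^ n) (L^[n] g))]
  · have h := Submodule.inner_left_of_mem_orthogonal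
      (sub_pow_apply_iterate_mem_iSup_map_pow T hL g n) hg
    rwa [inner_sub_right, sub_eq_zero, eq_comm] at h
end

section
/- Wold decomposition for a 2-isometry: let T be a 2-isometry on a complex Hilbert space H, let H₀ := ⋂_{n≥0} Tⁿ(H) and let H₁ be the closed linear span of ⋃_{n≥0} Tⁿ(ker T*). Then H₁ = H₀ᗮ, so H = H₀ ⊕ H₁ orthogonally; both H₀ and H₁ reduce T; the restriction T|_{H₀} is unitary; and the restriction T|_{H₁} is an analytic 2-isometry, i.e. ⋂_{n≥0} Tⁿ(H₁) = {0}. Moreover the decomposition is unique: if H = K₀ ⊕ K₁ orthogonally with K₀ and K₁ both T-reducing, T|_{K₀} unitary and T|_{K₁} analytic, then K₀ = H₀ and K₁ = H₁. -/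
open ContinuousLinearMap Filter
open scoped InnerProductSpace ComplexInnerProductSpace

/-!
For a 2-isometry the defect `Δ(h) = ‖T h‖² - ‖h‖²` is `T`-invariant, so
`‖Tⁿ h‖² = ‖h‖² + n Δ(h)`. Hence `Δ ≥ 0`, `T` is bounded below with closed ranges `Tⁿ(H)`, and
`Δ` vanishes on `H₀ = ⋂ Tⁿ(H)`; there `T` is isometric, so `T† T = 1` on `H₀` and `T` maps `H₀`
onto itself. Consequently `H₀` reduces `T`, which puts every `Tⁿ(ker T†)` inside `H₀ᗮ`.
Conversely, if `x` is orthogonal to all `Tⁿ(ker T†)`, repeatedly pulling `x` back through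
`T⁻¹ ∘ P_{range T}` produces `y n` with `‖x - Tⁿ (y n)‖² ≤ n Δ(y n)` and `∑ Δ(y n) < ∞`, so `x`
is a limit of points of `Tᵐ(H)` for every `m`. Uniqueness: `T K₀ = K₀` forces `K₀ ⊆ H₀`, while
`T†` is a right inverse of `T` preserving `H₀ ∩ K₁`, which therefore lies in `⋂ Tⁿ(K₁) = 0`.
-/

theorem nonpos_of_forall_natCast_mul_le {α : Type*} [Field α] [LinearOrder α]
    [IsStrictOrderedRing α] [Archimedean α] {a C : α} (h : ∀ n : ℕ, n * a ≤ C) : a ≤ 0 := by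
  by_contra! ha
  obtain ⟨n, hn⟩ := exists_nat_gt (C / a)
  rw [div_lt_iff₀ ha] at hn
  exact (h n).not_gt hn

theorem Summable.exists_ge_natCast_mul_lt {f : ℕ → ℝ} (hf : Summable f) {ε : ℝ} (hε : 0 < ε)
    (m : ℕ) : ∃ n ≥ m, n * f n < ε := by
  by_contra! h
  refine Real.not_summable_natCast_inv ((hf.mul_left ε⁻¹).of_norm_bounded_eventually_nat ?_)
  filter_upwards [eventually_ge_atTop (max m 1)] with n hn
  have hn0 : (0 : ℝ) < n := by exact_mod_cast (le_max_right m 1).trans hn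
  rw [norm_inv, Real.norm_natCast, inv_le_iff_one_le_mul₀ hn0, mul_assoc, le_inv_mul_iff₀ hε,
    mul_one, mul_comm]
  exact h n ((le_max_left m 1).trans hn)

namespace LinearMap

variable {R M : Type*} [Semiring R] [AddCommMonoid M] [Module R M]

def hyperrange (f : M →ₗ[R] M) : Submodule R M := ⨅ n : ℕ, range (f ^ n)

variable {f : M →ₗ[R] M}

theorem mem_hyperrange {x : M} : x ∈ f.hyperrange ↔ ∀ n : ℕ, x ∈ range (f ^ n) :=
  Submodule.mem_iInf _

theorem range_pow_antitone : Antitone fun n : ℕ ↦ range (f ^ n) :=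
  antitone_nat_of_succ_le fun n ↦ by
    rw [pow_succ, Module.End.mul_eq_comp]
    exact range_comp_le_range _ _

theorem hyperrange_le_range : f.hyperrange ≤ range f :=
  (iInf_le _ 1).trans_eq (by rw [pow_one])

theorem hyperrange_mem_invtSubmodule : f.hyperrange ∈ Module.End.invtSubmodule f := by
  intro x hx
  refine Submodule.mem_comap.mpr (mem_hyperrange.mpr fun n ↦ ?_)
  obtain ⟨y, rfl⟩ := mem_hyperrange.mp hx n
  exact ⟨f y, by rw [← Module.End.mul_apply, ← pow_succ, pow_succ', Module.End.mul_apply]⟩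

theorem map_pow_le_of_mem_invtSubmodule {K : Submodule R M}
    (hK : K ∈ Module.End.invtSubmodule f) (n : ℕ) : K.map (f ^ n) ≤ K := by
  rw [← Module.End.mem_invtSubmodule_iff_map_le]
  induction n with
  | zero => simp
  | succ n ih => rw [pow_succ]; exact Module.End.invtSubmodule.comp _ ih hK

theorem le_map_pow_of_le_map {K : Submodule R M} (hK : K ≤ K.map f) (n : ℕ) :
    K ≤ K.map (f ^ n) := by
  induction n with
  | zero => simp [Module.End.one_eq_id]
  | succ n ih =>
    rw [pow_succ', Module.End.mul_eq_comp, Submodule.map_comp]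
    exact hK.trans (Submodule.map_mono ih)

theorem le_hyperrange_of_le_map {K : Submodule R M} (hK : K ≤ K.map f) : K ≤ f.hyperrange :=
  le_iInf fun n ↦ (le_map_pow_of_le_map hK n).trans map_le_range

theorem iInf_map_pow_le_inf_hyperrange (K : Submodule R M) :
    ⨅ n : ℕ, K.map (f ^ n) ≤ K ⊓ f.hyperrange :=
  le_inf (by simpa [Module.End.one_eq_id] using iInf_le (fun n : ℕ ↦ K.map (f ^ n)) 0)
    (iInf_mono fun _ ↦ map_le_range)

theorem map_hyperrange_of_injective (hf : Function.Injective f) :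
    f.hyperrange.map f = f.hyperrange := by
  refine le_antisymm (Submodule.map_le_iff_le_comap.mpr hyperrange_mem_invtSubmodule) ?_
  intro x hx
  obtain ⟨y, rfl⟩ := mem_hyperrange.mp hx 1
  refine ⟨y, mem_hyperrange.mpr fun n ↦ ?_, by simp⟩
  obtain ⟨z, hz⟩ := mem_hyperrange.mp hx (n + 1)
  exact ⟨z, hf (by rwa [pow_one, pow_succ', Module.End.mul_apply] at hz)⟩

end LinearMap

theorem Submodule.eq_orthogonal_of_isOrtho_of_sup_eq_top {𝕜 E : Type*} [RCLike 𝕜]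
    [NormedAddCommGroup E] [InnerProductSpace 𝕜 E] {K₀ K₁ : Submodule 𝕜 E} (h : K₀ ⟂ K₁)
    (hsup : K₀ ⊔ K₁ = ⊤) : K₁ = K₀ᗮ :=
  eq_of_le_of_inf_le_of_sup_le h.symm.le (by rw [inf_comm, K₀.inf_orthogonal_eq_bot]; exact bot_le)
    (by rw [sup_comm K₁, hsup]; exact le_top)

theorem ContinuousLinearMap.IsPositive.apply_eq_zero_of_inner_self_eq_zero {E : Type*}
    [NormedAddCommGroup E] [InnerProductSpace ℂ E] [CompleteSpace E] {A : E →L[ℂ] E}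
    (hA : A.IsPositive) {x : E} (hx : ⟪A x, x⟫ = 0) : A x = 0 := by
  obtain ⟨B, rfl⟩ := CStarAlgebra.nonneg_iff_eq_star_mul_self.mp ((nonneg_iff_isPositive A).mpr hA)
  rw [star_eq_adjoint, mul_apply_eq_comp, adjoint_inner_left, inner_self_eq_zero] at hx
  rw [mul_apply_eq_comp, hx, map_zero]

-- `T† T - 1` is a positive operator, so it vanishes wherever its quadratic form does.
theorem ContinuousLinearMap.adjoint_apply_apply_eq_self {E : Type*} [NormedAddCommGroup E]
    [InnerProductSpace ℂ E] [CompleteSpace E] {T : E →L[ℂ] E} (hT : ∀ y, ‖y‖ ≤ ‖T y‖) {x : E}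
    (hx : ‖T x‖ = ‖x‖) : adjoint T (T x) = x := by
  have hinner (y : E) : ⟪(adjoint T * T - 1) y, y⟫ = ((‖T y‖ ^ 2 - ‖y‖ ^ 2 : ℝ) : ℂ) := by
    rw [sub_apply, mul_apply_eq_comp, one_apply_eq_self, inner_sub_left, adjoint_inner_left,
      inner_self_eq_norm_sq_to_K, inner_self_eq_norm_sq_to_K]
    push_cast; rfl
  have hpos : (adjoint T * T - 1).IsPositive := by
    refine (isPositive_iff' _).mpr ⟨(IsSelfAdjoint.star_mul_self T).sub (IsSelfAdjoint.one _),
      fun y ↦ ?_⟩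
    rw [hinner, Complex.zero_le_real, sub_nonneg]
    exact pow_le_pow_left₀ (norm_nonneg y) (hT y) 2
  have := hpos.apply_eq_zero_of_inner_self_eq_zero
    (by rw [hinner, hx, sub_self, Complex.ofReal_zero])
  rwa [sub_apply, mul_apply_eq_comp, one_apply_eq_self, sub_eq_zero] at this

namespace ContinuousLinearMap

section Normed

variable {𝕜 E : Type*} [NormedField 𝕜] [NormedAddCommGroup E] [NormedSpace 𝕜 E]

def IsTwoIsometry (T : E →L[𝕜] E) : Prop :=
  ∀ h : E, ‖T (T h)‖ ^ 2 - 2 * ‖T h‖ ^ 2 + ‖h‖ ^ 2 = 0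

def normSqDefect (T : E →L[𝕜] E) (h : E) : ℝ := ‖T h‖ ^ 2 - ‖h‖ ^ 2

namespace IsTwoIsometry

variable {T : E →L[𝕜] E} (hT : T.IsTwoIsometry)
include hT

theorem normSqDefect_pow_apply (n : ℕ) (h : E) :
    T.normSqDefect ((T ^ n) h) = T.normSqDefect h := by
  induction n with
  | zero => simp
  | succ n ih =>
    have := hT ((T ^ n) h)
    rw [pow_succ' T, mul_apply_eq_comp, ← ih]
    unfold normSqDefect
    linarith

theorem norm_pow_apply_sq (n : ℕ) (h : E) :
    ‖(T ^ n) h‖ ^ 2 = ‖h‖ ^ 2 + n * T.normSqDefect h := by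
  induction n with
  | zero => simp
  | succ n ih =>
    have := hT.normSqDefect_pow_apply n h
    rw [pow_succ' T, mul_apply_eq_comp, Nat.cast_succ]
    unfold normSqDefect at *
    linarith

theorem normSqDefect_nonneg (h : E) : 0 ≤ T.normSqDefect h := by
  refine neg_nonpos.mp (nonpos_of_forall_natCast_mul_le (C := ‖h‖ ^ 2) fun n ↦ ?_)
  have := hT.norm_pow_apply_sq n h
  nlinarith [sq_nonneg ‖(T ^ n) h‖]

theorem norm_le_norm_pow_apply (n : ℕ) (h : E) : ‖h‖ ≤ ‖(T ^ n) h‖ := by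
  refine (pow_le_pow_iff_left₀ (norm_nonneg _) (norm_nonneg _) two_ne_zero).mp ?_
  rw [hT.norm_pow_apply_sq]
  exact le_add_of_nonneg_right (mul_nonneg n.cast_nonneg (hT.normSqDefect_nonneg h))

theorem norm_le_norm_apply (h : E) : ‖h‖ ≤ ‖T h‖ := by
  simpa using hT.norm_le_norm_pow_apply 1 h

theorem antilipschitz_pow (n : ℕ) : AntilipschitzWith 1 (T ^ n) :=
  (T ^ n).antilipschitz_of_bound fun h ↦ by simpa using hT.norm_le_norm_pow_apply n h

theorem injective : Function.Injective T := by
  simpa using (hT.antilipschitz_pow 1).injective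

theorem isClosed_range_pow [CompleteSpace E] (n : ℕ) :
    IsClosed (LinearMap.range ((T : E →ₗ[𝕜] E) ^ n) : Set E) := by
  rw [← toLinearMap_pow, LinearMap.coe_range]
  exact (hT.antilipschitz_pow n).isClosed_range (T ^ n).uniformContinuous

theorem map_hyperrange :
    (T : E →ₗ[𝕜] E).hyperrange.map (T : E →ₗ[𝕜] E) = (T : E →ₗ[𝕜] E).hyperrange :=
  LinearMap.map_hyperrange_of_injective hT.injective

-- A point of the hyperrange is `Tⁿ y` for every `n`, so `n Δ(x) = n Δ(y) ≤ ‖x‖²` for every `n`.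
theorem norm_apply_of_mem_hyperrange {x : E} (hx : x ∈ (T : E →ₗ[𝕜] E).hyperrange) :
    ‖T x‖ = ‖x‖ := by
  have hdefect : T.normSqDefect x ≤ 0 := nonpos_of_forall_natCast_mul_le (C := ‖x‖ ^ 2) fun n ↦ by
    obtain ⟨y, rfl⟩ := LinearMap.mem_hyperrange.mp hx n
    rw [← toLinearMap_pow, coe_coe, hT.normSqDefect_pow_apply, hT.norm_pow_apply_sq]
    nlinarith [sq_nonneg ‖y‖]
  have := le_antisymm hdefect (hT.normSqDefect_nonneg x)
  rwa [normSqDefect, sub_eq_zero, pow_left_inj₀ (norm_nonneg _) (norm_nonneg _) two_ne_zero]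
    at this

end IsTwoIsometry

end Normed

section Hilbert

variable {𝕜 E : Type*} [RCLike 𝕜] [NormedAddCommGroup E] [InnerProductSpace 𝕜 E] [CompleteSpace E]

noncomputable def wanderingSpan (T : E →L[𝕜] E) : Submodule 𝕜 E :=
  ⨆ n : ℕ, (LinearMap.ker (adjoint T : E →ₗ[𝕜] E)).map ((T : E →ₗ[𝕜] E) ^ n)

variable {T : E →L[𝕜] E}

theorem wanderingSpan_mem_invtSubmodule :
    T.wanderingSpan ∈ Module.End.invtSubmodule (T : E →ₗ[𝕜] E) := by
  rw [Module.End.mem_invtSubmodule_iff_map_le, wanderingSpan, Submodule.map_iSup]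
  refine iSup_le fun n ↦ le_iSup_of_le (n + 1) ?_
  rw [← Submodule.map_comp, ← Module.End.mul_eq_comp, ← pow_succ']

theorem wanderingSpan_le_orthogonal {K : Submodule 𝕜 E}
    (hK : K ∈ Module.End.invtSubmodule (adjoint T : E →ₗ[𝕜] E))
    (hKT : K ≤ LinearMap.range (T : E →ₗ[𝕜] E)) : T.wanderingSpan ≤ Kᗮ := by
  have hker : LinearMap.ker (adjoint T : E →ₗ[𝕜] E) ≤ Kᗮ := by
    rw [← T.orthogonal_range]
    exact Submodule.orthogonal_le hKT
  exact iSup_le fun n ↦ (Submodule.map_mono hker).trans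
    (LinearMap.map_pow_le_of_mem_invtSubmodule (orthogonal_mem_invtSubmodule hK) n)

theorem exists_adjoint_sub_apply_eq_zero
    (hT : IsClosed (LinearMap.range (T : E →ₗ[𝕜] E) : Set E)) (x : E) :
    ∃ z, adjoint T (x - T z) = 0 := by
  have : CompleteSpace (LinearMap.range (T : E →ₗ[𝕜] E)) := hT.completeSpace_coe
  obtain ⟨_, ⟨z, rfl⟩, hz⟩ := Submodule.HasOrthogonalProjection.exists_orthogonal
    (K := LinearMap.range (T : E →ₗ[𝕜] E)) x
  rw [T.orthogonal_range] at hz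
  exact ⟨z, hz⟩

theorem norm_apply_sq_add_norm_sub_apply_sq {x z : E} (h : adjoint T (x - T z) = 0) :
    ‖T z‖ ^ 2 + ‖x - T z‖ ^ 2 = ‖x‖ ^ 2 := by
  have horth : ⟪T z, x - T z⟫_𝕜 = 0 := by rw [← adjoint_inner_right, h, inner_zero_right]
  have := norm_add_sq_eq_norm_sq_add_norm_sq_of_inner_eq_zero _ _ horth
  rw [add_sub_cancel] at this
  rw [sq, sq, sq, this]

theorem normSqDefect_le_of_adjoint_sub_eq_zero {x z : E} (h : adjoint T (x - T z) = 0) :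
    T.normSqDefect z ≤ ‖x‖ ^ 2 - ‖z‖ ^ 2 := by
  have := norm_apply_sq_add_norm_sub_apply_sq h
  unfold normSqDefect
  nlinarith [sq_nonneg ‖x - T z‖]

-- `Tᵏ (y k - T y (k+1))` lies in `Tᵏ (ker T†)`, and these increments telescope.
theorem sub_pow_apply_mem_wanderingSpan {y : ℕ → E}
    (hy : ∀ n, adjoint T (y n - T (y (n + 1))) = 0) (n : ℕ) :
    y 0 - (T ^ n) (y n) ∈ T.wanderingSpan := by
  induction n with
  | zero => simp
  | succ n ih =>
    have hstep : (T ^ n) (y n - T (y (n + 1))) ∈ T.wanderingSpan :=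
      le_iSup (fun k : ℕ ↦ (LinearMap.ker (adjoint T : E →ₗ[𝕜] E)).map ((T : E →ₗ[𝕜] E) ^ k)) n
        ⟨_, hy n, by rw [← toLinearMap_pow]; rfl⟩
    convert T.wanderingSpan.add_mem ih hstep using 1
    rw [map_sub, pow_succ, mul_apply_eq_comp]
    abel

namespace IsTwoIsometry

section BackwardOrbit

/- Since `ker T† = (range T)ᗮ`, `hy` says that `T (y (n+1))` is the orthogonal projection of `y n`
onto `range T`. -/
variable {T : E →L[𝕜] E} (hT : T.IsTwoIsometry) {y : ℕ → E}
  (hy : ∀ n, adjoint T (y n - T (y (n + 1))) = 0)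
include hT hy

theorem norm_le_norm_zero (n : ℕ) : ‖y n‖ ≤ ‖y 0‖ := by
  refine antitone_nat_of_succ_le (f := fun n ↦ ‖y n‖) (fun n ↦ ?_) (Nat.zero_le n)
  have := normSqDefect_le_of_adjoint_sub_eq_zero (hy n)
  have := hT.normSqDefect_nonneg (y (n + 1))
  exact (pow_le_pow_iff_left₀ (norm_nonneg _) (norm_nonneg _) two_ne_zero).mp (by linarith)

theorem summable_normSqDefect : Summable fun n ↦ T.normSqDefect (y n) := by
  refine (summable_nat_add_iff 1).mp (summable_of_sum_range_le (c := ‖y 0‖ ^ 2)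
    (fun n ↦ hT.normSqDefect_nonneg _) fun N ↦ ?_)
  calc ∑ i ∈ Finset.range N, T.normSqDefect (y (i + 1))
      ≤ ∑ i ∈ Finset.range N, (‖y i‖ ^ 2 - ‖y (i + 1)‖ ^ 2) :=
        Finset.sum_le_sum fun i _ ↦ normSqDefect_le_of_adjoint_sub_eq_zero (hy i)
    _ = ‖y 0‖ ^ 2 - ‖y N‖ ^ 2 := Finset.sum_range_sub' _ _
    _ ≤ ‖y 0‖ ^ 2 := sub_le_self _ (sq_nonneg _)

theorem norm_sub_pow_apply_sq_le (hx : y 0 ∈ T.wanderingSpanᗮ) (n : ℕ) :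
    ‖y 0 - (T ^ n) (y n)‖ ^ 2 ≤ n * T.normSqDefect (y n) := by
  set w := y 0 - (T ^ n) (y n)
  have hw : ⟪y 0, w⟫_𝕜 = 0 :=
    Submodule.inner_left_of_mem_orthogonal (sub_pow_apply_mem_wanderingSpan hy n) hx
  have hpyth : ‖(T ^ n) (y n)‖ ^ 2 = ‖y 0‖ ^ 2 + ‖w‖ ^ 2 := by
    rw [← sub_sub_cancel (y 0) ((T ^ n) (y n)), norm_sub_sq (𝕜 := 𝕜), hw, map_zero, mul_zero,
      sub_zero]
  have := hT.norm_le_norm_zero hy n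
  rw [hT.norm_pow_apply_sq] at hpyth
  nlinarith [norm_nonneg (y n)]

end BackwardOrbit

variable (hT : T.IsTwoIsometry)
include hT

theorem orthogonal_wanderingSpan_le_hyperrange :
    T.wanderingSpanᗮ ≤ (T : E →ₗ[𝕜] E).hyperrange := by
  intro x hx
  choose L hL using exists_adjoint_sub_apply_eq_zero (by simpa using hT.isClosed_range_pow 1)
  set y : ℕ → E := fun n ↦ L^[n] x
  have hy (n : ℕ) : adjoint T (y n - T (y (n + 1))) = 0 := by
    simp only [y, Function.iterate_succ_apply']
    exact hL _
  refine LinearMap.mem_hyperrange.mpr fun m ↦ ?_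
  rw [← SetLike.mem_coe, ← (hT.isClosed_range_pow m).closure_eq, Metric.mem_closure_iff]
  intro ε hε
  obtain ⟨n, hnm, hn⟩ := (hT.summable_normSqDefect hy).exists_ge_natCast_mul_lt (pow_pos hε 2) m
  refine ⟨(T ^ n) (y n), LinearMap.range_pow_antitone hnm ⟨y n, by rw [← toLinearMap_pow]; rfl⟩,
    ?_⟩
  rw [dist_eq_norm, ← pow_lt_pow_iff_left₀ (norm_nonneg _) hε.le two_ne_zero]
  exact (hT.norm_sub_pow_apply_sq_le hy hx n).trans_lt hn

end IsTwoIsometry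

end Hilbert

namespace IsTwoIsometry

variable {E : Type*} [NormedAddCommGroup E] [InnerProductSpace ℂ E] [CompleteSpace E]
  {T : E →L[ℂ] E} (hT : T.IsTwoIsometry)
include hT

theorem adjoint_apply_apply_of_mem_hyperrange {x : E}
    (hx : x ∈ (T : E →ₗ[ℂ] E).hyperrange) : adjoint T (T x) = x :=
  adjoint_apply_apply_eq_self hT.norm_le_norm_apply (hT.norm_apply_of_mem_hyperrange hx)

theorem hyperrange_mem_invtSubmodule_adjoint :
    (T : E →ₗ[ℂ] E).hyperrange ∈ Module.End.invtSubmodule (adjoint T : E →ₗ[ℂ] E) := by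
  intro x hx
  rw [← hT.map_hyperrange] at hx
  obtain ⟨y, hy, rfl⟩ := hx
  simpa [hT.adjoint_apply_apply_of_mem_hyperrange hy] using hy

theorem apply_adjoint_apply_of_mem_hyperrange {x : E}
    (hx : x ∈ (T : E →ₗ[ℂ] E).hyperrange) : T (adjoint T x) = x := by
  rw [← hT.map_hyperrange] at hx
  obtain ⟨y, hy, rfl⟩ := hx
  simp [hT.adjoint_apply_apply_of_mem_hyperrange hy]

theorem orthogonal_hyperrange :
    (T : E →ₗ[ℂ] E).hyperrangeᗮ = T.wanderingSpan.topologicalClosure := by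
  refine le_antisymm ?_ (T.wanderingSpan.topologicalClosure_minimal
    (wanderingSpan_le_orthogonal hT.hyperrange_mem_invtSubmodule_adjoint
      LinearMap.hyperrange_le_range) (Submodule.isClosed_orthogonal _))
  rw [← Submodule.orthogonal_orthogonal_eq_closure]
  exact Submodule.orthogonal_le hT.orthogonal_wanderingSpan_le_hyperrange

theorem eq_hyperrange_of_sup_eq_top {K₀ K₁ : Submodule ℂ E} (hsup : K₀ ⊔ K₁ = ⊤)
    (hK₀ : K₀ ≤ K₀.map (T : E →ₗ[ℂ] E))
    (hK₁ : K₁ ∈ Module.End.invtSubmodule (adjoint T : E →ₗ[ℂ] E))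
    (hK₁_analytic : ⨅ n : ℕ, K₁.map ((T : E →ₗ[ℂ] E) ^ n) = ⊥) :
    K₀ = (T : E →ₗ[ℂ] E).hyperrange := by
  set H₀ := (T : E →ₗ[ℂ] E).hyperrange
  have hinf : H₀ ⊓ K₁ ≤ (H₀ ⊓ K₁).map (T : E →ₗ[ℂ] E) := fun x hx ↦
    ⟨adjoint T x, ⟨hT.hyperrange_mem_invtSubmodule_adjoint hx.1, hK₁ hx.2⟩,
      hT.apply_adjoint_apply_of_mem_hyperrange hx.1⟩
  have hdisj : H₀ ⊓ K₁ = ⊥ := eq_bot_iff.mpr <| hK₁_analytic ▸ le_iInf fun n ↦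
    (LinearMap.le_map_pow_of_le_map hinf n).trans (Submodule.map_mono inf_le_right)
  exact eq_of_le_of_inf_le_of_sup_le (LinearMap.le_hyperrange_of_le_map hK₀)
    (by rw [hdisj]; exact bot_le) (by rw [hsup]; exact le_top)

end IsTwoIsometry

end ContinuousLinearMap

/-- **Wold decomposition for a 2-isometry.**
With `H₀ = ⋂ₙ Tⁿ(H)` and `H₁` the closed span of `⋃ₙ Tⁿ(ker T*)`, one has
`H₁ = H₀ᗮ`, both subspaces reduce `T`, `T|H₀` is unitary, `T|H₁` is an analytic
2-isometry, and the decomposition is unique. -/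
theorem twoIsometry_wold_decomposition
    {H : Type*} [NormedAddCommGroup H] [InnerProductSpace ℂ H] [CompleteSpace H]
    (T : H →L[ℂ] H)
    (h2iso : ∀ h : H, ‖T (T h)‖ ^ 2 - 2 * ‖T h‖ ^ 2 + ‖h‖ ^ 2 = 0) :
    ∀ H₀ H₁ : Submodule ℂ H,
      H₀ = (⨅ n : ℕ, LinearMap.range ((T ^ n : H →L[ℂ] H) : H →ₗ[ℂ] H)) →
      H₁ = (⨆ n : ℕ, (LinearMap.ker ((adjoint T : H →L[ℂ] H) : H →ₗ[ℂ] H)).map ((T ^ n : H →L[ℂ] H) : H →ₗ[ℂ] H)).topologicalClosure →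
      H₁ = H₀ᗮ ∧
      (∀ x ∈ H₀, T x ∈ H₀) ∧ (∀ x ∈ H₀, adjoint T x ∈ H₀) ∧
      (∀ x ∈ H₁, T x ∈ H₁) ∧ (∀ x ∈ H₁, adjoint T x ∈ H₁) ∧
      (∀ x ∈ H₀, ‖T x‖ = ‖x‖) ∧ H₀.map (T : H →ₗ[ℂ] H) = H₀ ∧
      (⨅ n : ℕ, H₁.map ((T ^ n : H →L[ℂ] H) : H →ₗ[ℂ] H)) = ⊥ ∧
      (∀ K₀ K₁ : Submodule ℂ H, IsClosed (K₀ : Set H) → IsClosed (K₁ : Set H) →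
        (∀ x ∈ K₀, ∀ y ∈ K₁, ⟪x, y⟫ = 0) → K₀ ⊔ K₁ = ⊤ →
        (∀ x ∈ K₀, T x ∈ K₀) → (∀ x ∈ K₀, adjoint T x ∈ K₀) →
        (∀ x ∈ K₁, T x ∈ K₁) → (∀ x ∈ K₁, adjoint T x ∈ K₁) →
        (∀ x ∈ K₀, ‖T x‖ = ‖x‖) → K₀.map (T : H →ₗ[ℂ] H) = K₀ →
        (⨅ n : ℕ, K₁.map ((T ^ n : H →L[ℂ] H) : H →ₗ[ℂ] H)) = ⊥ →
        K₀ = H₀ ∧ K₁ = H₁) := by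
  have hT : T.IsTwoIsometry := h2iso
  simp only [toLinearMap_pow]
  rintro _ H₁ rfl hH₁
  change H₁ = T.wanderingSpan.topologicalClosure at hH₁
  have hH₁_eq : H₁ = (T : H →ₗ[ℂ] H).hyperrangeᗮ := hH₁.trans hT.orthogonal_hyperrange.symm
  refine ⟨hH₁_eq, LinearMap.hyperrange_mem_invtSubmodule, hT.hyperrange_mem_invtSubmodule_adjoint,
    hH₁ ▸ Submodule.topologicalClosure_mem_invtSubmodule wanderingSpan_mem_invtSubmodule,
    hH₁_eq ▸ orthogonal_mem_invtSubmodule (by simpa using LinearMap.hyperrange_mem_invtSubmodule),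
    fun x hx ↦ hT.norm_apply_of_mem_hyperrange hx, hT.map_hyperrange, ?_, ?_⟩
  · rw [eq_bot_iff, ← (T : H →ₗ[ℂ] H).hyperrange.inf_orthogonal_eq_bot, inf_comm, ← hH₁_eq]
    exact LinearMap.iInf_map_pow_le_inf_hyperrange H₁
  · intro K₀ K₁ _ _ horth hsup _ _ _ hK₁ _ hK₀ hK₁_analytic
    have hK₀_eq := hT.eq_hyperrange_of_sup_eq_top hsup hK₀.ge hK₁ hK₁_analytic
    refine ⟨hK₀_eq, ?_⟩
    rw [Submodule.eq_orthogonal_of_isOrtho_of_sup_eq_top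
      (Submodule.isOrtho_iff_inner_eq.mpr horth) hsup, hK₀_eq, hH₁_eq]
end

section
/- Let (T₁, T₂) be a pair of doubly commuting 2-isometries on a complex Hilbert space H. For i = 1, 2 set Lᵢ := (Tᵢ*Tᵢ)⁻¹Tᵢ* and Pᵢ := I − TᵢLᵢ. Then P₁P₂ = P₂P₁, and P := P₁P₂ is the orthogonal projection of H onto ker T₁* ∩ ker T₂*. -/
/-!
Write `Sᵢ = Tᵢ*`, so that `Pᵢ = 1 - Qᵢ` with `Qᵢ = TᵢRᵢSᵢ`. A right inverse `Rᵢ` of the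
self-adjoint `SᵢTᵢ` is its two-sided, self-adjoint inverse, so each `Qᵢ` is a
self-adjoint idempotent with `SᵢQᵢ = Sᵢ`, hence `Pᵢ` is the orthogonal projection onto `ker Sᵢ`.
Double commutativity makes each of `T₁`, `S₁` commute with `T₂`, `S₂`, hence with `S₂T₂` and
its inverse `R₂`, and symmetrically; so `Q₁` and `Q₂` commute. The product of two commuting
orthogonal projections is the orthogonal projection onto the intersection of their ranges.
-/

open ContinuousLinearMap

section StarMonoid

variable {M : Type*} [Monoid M] [StarMul M] {a r : M}

theorem IsSelfAdjoint.isSelfAdjoint_of_mul_eq_one (ha : IsSelfAdjoint a) (h : a * r = 1) :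
    IsSelfAdjoint r :=
  left_inv_eq_right_inv (by simpa [ha.star_eq] using congr(star $h)) h

theorem IsSelfAdjoint.mul_eq_one_comm (ha : IsSelfAdjoint a) (h : a * r = 1) : r * a = 1 := by
  simpa [(ha.isSelfAdjoint_of_mul_eq_one h).star_eq, ha.star_eq] using congr(star $h)

theorem IsSelfAdjoint.commute_of_mul_eq_one {x : M} (ha : IsSelfAdjoint a) (h : a * r = 1)
    (hx : Commute a x) : Commute r x :=
  Commute.units_inv_left (u := ⟨a, r, h, ha.mul_eq_one_comm h⟩) hx

end StarMonoid

section StarRing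

variable {A : Type*} [Ring A] [StarRing A] {t s r : A}

theorem isStarProjection_mul_mul_star (hr : star t * t * r = 1) :
    IsStarProjection (t * (r * star t)) where
  isIdempotentElem := by
    rw [IsIdempotentElem, show t * (r * star t) * (t * (r * star t)) =
      t * (r * (star t * t * r) * star t) by noncomm_ring, hr, mul_one]
  isSelfAdjoint := by
    have hr' := (IsSelfAdjoint.star_mul_self t).isSelfAdjoint_of_mul_eq_one hr
    simp [IsSelfAdjoint, hr'.star_eq, mul_assoc]

theorem star_mul_mul_mul_star (hr : star t * t * r = 1) :
    star t * (t * (r * star t)) = star t := by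
  rw [← mul_assoc, ← mul_assoc, hr, one_mul]

theorem Commute.mul_mul_star {x : A} (hr : star s * s * r = 1) (hs : Commute x s)
    (hs' : Commute x (star s)) : Commute x (s * (r * star s)) :=
  have hxr : Commute x r :=
    ((IsSelfAdjoint.star_mul_self s).commute_of_mul_eq_one hr (hs'.mul_right hs).symm).symm
  hs.mul_right (hxr.mul_right hs')

theorem commute_mul_mul_star_of_doublyCommuting {r₁ r₂ : A} (hr₁ : star t * t * r₁ = 1)
    (hr₂ : star s * s * r₂ = 1) (hts : Commute t s) (hts' : Commute t (star s)) :
    Commute (t * (r₁ * star t)) (s * (r₂ * star s)) := by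
  have ht : Commute t (s * (r₂ * star s)) := hts.mul_mul_star hr₂ hts'
  have ht' : Commute (star t) (s * (r₂ * star s)) :=
    (commute_star_comm.mpr hts').mul_mul_star hr₂ hts.star_star
  have hr₁' : Commute r₁ (s * (r₂ * star s)) :=
    (IsSelfAdjoint.star_mul_self t).commute_of_mul_eq_one hr₁ (ht'.mul_left ht)
  exact ht.mul_left (hr₁'.mul_left ht')

end StarRing

namespace LinearMap

variable {R M : Type*} [Semiring R] [AddCommMonoid M] [Module R M]

theorem range_mul_of_commute {p q : M →ₗ[R] M} (hp : IsIdempotentElem p)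
    (hq : IsIdempotentElem q) (hpq : Commute p q) : range (p * q) = range p ⊓ range q := by
  ext x
  simp only [Submodule.mem_inf, IsIdempotentElem.mem_range_iff (hp.mul_of_commute hpq hq),
    IsIdempotentElem.mem_range_iff hp, IsIdempotentElem.mem_range_iff hq, Module.End.mul_apply]
  constructor
  · intro h
    constructor
    · rw [← h]
      change (p * (p * q)) x = (p * q) x
      rw [← mul_assoc, hp.eq]
    · rw [← h]
      change (q * (p * q)) x = (p * q) x
      rw [← mul_assoc, ← hpq.eq, mul_assoc, hq.eq]
  · rintro ⟨h₁, h₂⟩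
    rw [h₂, h₁]

end LinearMap

namespace ContinuousLinearMap

variable {𝕜 H : Type*} [RCLike 𝕜] [NormedAddCommGroup H] [InnerProductSpace 𝕜 H]
  [CompleteSpace H]

theorem range_one_sub_mul_mul_star {T R : H →L[𝕜] H} (hR : star T * T * R = 1) :
    LinearMap.range ((1 - T * (R * star T) : H →L[𝕜] H) : H →ₗ[𝕜] H) =
      LinearMap.ker ((star T : H →L[𝕜] H) : H →ₗ[𝕜] H) := by
  rw [LinearMap.IsIdempotentElem.range_eq_ker_one_sub
    (isStarProjection_mul_mul_star hR).isIdempotentElem.one_sub.toLinearMap]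
  ext x
  simp only [toLinearMap_sub, toLinearMap_one, toLinearMap_mul, sub_sub_cancel, LinearMap.mem_ker,
    Module.End.mul_apply, coe_coe]
  constructor
  · intro h
    calc star T x = (star T * (T * (R * star T))) x := by rw [star_mul_mul_mul_star hR]
      _ = star T (T (R (star T x))) := rfl
      _ = 0 := by rw [h, map_zero]
  · intro h
    rw [h, map_zero, map_zero]

end ContinuousLinearMap

theorem doublyCommuting_twoIsometries_projections_commute_general
    {H : Type*} [NormedAddCommGroup H] [InnerProductSpace ℂ H] [CompleteSpace H]
    (T₁ T₂ : H →L[ℂ] H)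
    (hcomm : T₁ ∘L T₂ = T₂ ∘L T₁)
    (hdcomm : T₁ ∘L adjoint T₂ = adjoint T₂ ∘L T₁)
    (R₁ R₂ : H →L[ℂ] H)
    (hR₁r : (adjoint T₁ ∘L T₁) ∘L R₁ = 1)
    (hR₂r : (adjoint T₂ ∘L T₂) ∘L R₂ = 1) :
    ∀ P₁ P₂ : H →L[ℂ] H,
      P₁ = 1 - T₁ ∘L (R₁ ∘L adjoint T₁) → P₂ = 1 - T₂ ∘L (R₂ ∘L adjoint T₂) →
      P₁ ∘L P₂ = P₂ ∘L P₁ ∧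
      IsSelfAdjoint (P₁ ∘L P₂) ∧
      (P₁ ∘L P₂) ∘L (P₁ ∘L P₂) = P₁ ∘L P₂ ∧
      LinearMap.range (P₁ ∘L P₂ : H →ₗ[ℂ] H)
        = LinearMap.ker (adjoint T₁ : H →ₗ[ℂ] H) ⊓ LinearMap.ker (adjoint T₂ : H →ₗ[ℂ] H) := by
  rintro P₁ P₂ rfl rfl
  simp only [← mul_def, ← star_eq_adjoint] at hcomm hdcomm hR₁r hR₂r ⊢
  have hP₁ := (isStarProjection_mul_mul_star hR₁r).one_sub
  have hP₂ := (isStarProjection_mul_mul_star hR₂r).one_sub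
  have hQ := commute_mul_mul_star_of_doublyCommuting hR₁r hR₂r hcomm hdcomm
  have hP := (Commute.one_right _).sub_right ((Commute.one_left _).sub_left hQ)
  have hP₁₂ := hP₁.mul hP₂ hP
  refine ⟨hP.eq, hP₁₂.isSelfAdjoint, hP₁₂.isIdempotentElem.eq, ?_⟩
  rw [toLinearMap_mul, LinearMap.range_mul_of_commute hP₁.isIdempotentElem.toLinearMap
    hP₂.isIdempotentElem.toLinearMap (hP.map toLinearMapRingHom), range_one_sub_mul_mul_star hR₁r,
    range_one_sub_mul_mul_star hR₂r]

/-- For a doubly commuting pair of 2-isometries `(T₁, T₂)`,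
with `Lᵢ = (Tᵢ*Tᵢ)⁻¹Tᵢ*` and `Pᵢ = I − TᵢLᵢ`, the projections `P₁` and `P₂`
commute and `P := P₁P₂` is the orthogonal projection onto `ker T₁* ∩ ker T₂*`. -/
theorem doublyCommuting_twoIsometries_projections_commute
    {H : Type*} [NormedAddCommGroup H] [InnerProductSpace ℂ H] [CompleteSpace H]
    (T₁ T₂ : H →L[ℂ] H)
    (h2iso₁ : ∀ h : H, ‖T₁ (T₁ h)‖ ^ 2 - 2 * ‖T₁ h‖ ^ 2 + ‖h‖ ^ 2 = 0)
    (h2iso₂ : ∀ h : H, ‖T₂ (T₂ h)‖ ^ 2 - 2 * ‖T₂ h‖ ^ 2 + ‖h‖ ^ 2 = 0)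
    (hcomm : T₁ ∘L T₂ = T₂ ∘L T₁)
    (hdcomm : T₁ ∘L adjoint T₂ = adjoint T₂ ∘L T₁)
    (R₁ R₂ : H →L[ℂ] H)
    (hR₁l : R₁ ∘L (adjoint T₁ ∘L T₁) = 1) (hR₁r : (adjoint T₁ ∘L T₁) ∘L R₁ = 1)
    (hR₂l : R₂ ∘L (adjoint T₂ ∘L T₂) = 1) (hR₂r : (adjoint T₂ ∘L T₂) ∘L R₂ = 1) :
    ∀ P₁ P₂ : H →L[ℂ] H,
      P₁ = 1 - T₁ ∘L (R₁ ∘L adjoint T₁) → P₂ = 1 - T₂ ∘L (R₂ ∘L adjoint T₂) →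
      P₁ ∘L P₂ = P₂ ∘L P₁ ∧
      IsSelfAdjoint (P₁ ∘L P₂) ∧
      (P₁ ∘L P₂) ∘L (P₁ ∘L P₂) = P₁ ∘L P₂ ∧
      LinearMap.range (P₁ ∘L P₂ : H →ₗ[ℂ] H)
        = LinearMap.ker (adjoint T₁ : H →ₗ[ℂ] H) ⊓ LinearMap.ker (adjoint T₂ : H →ₗ[ℂ] H) :=
  doublyCommuting_twoIsometries_projections_commute_general T₁ T₂ hcomm hdcomm R₁ R₂ hR₁r hR₂r
end

section
/- Let (T₁, T₂) be a pair of doubly commuting 2-isometries on a complex Hilbert space H. Then both ⋂_{m≥0} T₁^m(H) and the closed linear span of ⋃_{m≥0} T₁^m(ker T₁*) reduce T₂ (and symmetrically with T₁ and T₂ interchanged). -/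
/-!
Double commutativity makes `T₂` and `T₂*` commute with both `T₁` and `T₁*`. An operator commuting
with `T` preserves every range `T^m(H)`, and one commuting with `T` and `T*` preserves every
`T^m(ker T*)`, hence their span and, by continuity, its closure.
-/

open ContinuousLinearMap

section

variable {R M : Type*} [Semiring R] [AddCommMonoid M] [Module R M] [TopologicalSpace M]
  {S T A : M →L[R] M}

theorem Commute.apply_mem_iInf_range_pow (h : Commute S T) :
    ∀ x ∈ ⨅ m : ℕ, LinearMap.range ((T ^ m : M →L[R] M) : M →ₗ[R] M),
      S x ∈ ⨅ m : ℕ, LinearMap.range ((T ^ m : M →L[R] M) : M →ₗ[R] M) := by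
  intro x hx
  rw [Submodule.mem_iInf] at hx ⊢
  intro m
  obtain ⟨y, rfl⟩ := hx m
  exact ⟨S y, DFunLike.congr_fun (h.pow_right m).eq.symm y⟩

theorem Commute.iSup_map_pow_ker_le_comap (hST : Commute S T) (hSA : Commute S A) :
    (⨆ m : ℕ, (LinearMap.ker (A : M →ₗ[R] M)).map ((T ^ m : M →L[R] M) : M →ₗ[R] M)) ≤
      (⨆ m : ℕ, (LinearMap.ker (A : M →ₗ[R] M)).map
        ((T ^ m : M →L[R] M) : M →ₗ[R] M)).comap (S : M →ₗ[R] M) := by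
  refine iSup_le fun m => ?_
  rintro _ ⟨k, hk, rfl⟩
  refine Submodule.mem_iSup_of_mem m ⟨S k, ?_, DFunLike.congr_fun (hST.pow_right m).eq.symm k⟩
  change A (S k) = 0
  rw [← show S (A k) = A (S k) from DFunLike.congr_fun hSA.eq k, show A k = 0 from hk, map_zero]

theorem Submodule.apply_mem_topologicalClosure_of_le_comap [ContinuousAdd M]
    [ContinuousConstSMul R M] {p : Submodule R M} (hp : p ≤ p.comap (S : M →ₗ[R] M)) {x : M}
    (hx : x ∈ p.topologicalClosure) : S x ∈ p.topologicalClosure :=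
  map_mem_closure S.continuous hx hp

theorem Commute.apply_mem_closure_iSup_map_pow_ker [ContinuousAdd M] [ContinuousConstSMul R M]
    (hST : Commute S T) (hSA : Commute S A) :
    ∀ x ∈ (⨆ m : ℕ, (LinearMap.ker (A : M →ₗ[R] M)).map
        ((T ^ m : M →L[R] M) : M →ₗ[R] M)).topologicalClosure,
      S x ∈ (⨆ m : ℕ, (LinearMap.ker (A : M →ₗ[R] M)).map
        ((T ^ m : M →L[R] M) : M →ₗ[R] M)).topologicalClosure := fun _ hx =>
  Submodule.apply_mem_topologicalClosure_of_le_comap (hST.iSup_map_pow_ker_le_comap hSA) hx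

end

theorem doublyCommuting_twoIsometries_wold_pieces_reduce_general
    {H : Type*} [NormedAddCommGroup H] [InnerProductSpace ℂ H] [CompleteSpace H]
    (T₁ T₂ : H →L[ℂ] H)
    (hcomm : T₁ ∘L T₂ = T₂ ∘L T₁)
    (hdcomm : T₁ ∘L adjoint T₂ = adjoint T₂ ∘L T₁) :
    (∀ x ∈ ⨅ m : ℕ, LinearMap.range ((T₁ ^ m : H →L[ℂ] H) : H →ₗ[ℂ] H),
        T₂ x ∈ ⨅ m : ℕ, LinearMap.range ((T₁ ^ m : H →L[ℂ] H) : H →ₗ[ℂ] H)) ∧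
    (∀ x ∈ ⨅ m : ℕ, LinearMap.range ((T₁ ^ m : H →L[ℂ] H) : H →ₗ[ℂ] H),
        adjoint T₂ x ∈ ⨅ m : ℕ, LinearMap.range ((T₁ ^ m : H →L[ℂ] H) : H →ₗ[ℂ] H)) ∧
    (∀ x ∈ (⨆ m : ℕ, (LinearMap.ker (adjoint T₁ : H →ₗ[ℂ] H)).map ((T₁ ^ m : H →L[ℂ] H) : H →ₗ[ℂ] H)).topologicalClosure,
        T₂ x ∈ (⨆ m : ℕ, (LinearMap.ker (adjoint T₁ : H →ₗ[ℂ] H)).map ((T₁ ^ m : H →L[ℂ] H) : H →ₗ[ℂ] H)).topologicalClosure) ∧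
    (∀ x ∈ (⨆ m : ℕ, (LinearMap.ker (adjoint T₁ : H →ₗ[ℂ] H)).map ((T₁ ^ m : H →L[ℂ] H) : H →ₗ[ℂ] H)).topologicalClosure,
        adjoint T₂ x ∈
          (⨆ m : ℕ, (LinearMap.ker (adjoint T₁ : H →ₗ[ℂ] H)).map ((T₁ ^ m : H →L[ℂ] H) : H →ₗ[ℂ] H)).topologicalClosure) ∧
    (∀ x ∈ ⨅ m : ℕ, LinearMap.range ((T₂ ^ m : H →L[ℂ] H) : H →ₗ[ℂ] H),
        T₁ x ∈ ⨅ m : ℕ, LinearMap.range ((T₂ ^ m : H →L[ℂ] H) : H →ₗ[ℂ] H)) ∧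
    (∀ x ∈ ⨅ m : ℕ, LinearMap.range ((T₂ ^ m : H →L[ℂ] H) : H →ₗ[ℂ] H),
        adjoint T₁ x ∈ ⨅ m : ℕ, LinearMap.range ((T₂ ^ m : H →L[ℂ] H) : H →ₗ[ℂ] H)) ∧
    (∀ x ∈ (⨆ m : ℕ, (LinearMap.ker (adjoint T₂ : H →ₗ[ℂ] H)).map ((T₂ ^ m : H →L[ℂ] H) : H →ₗ[ℂ] H)).topologicalClosure,
        T₁ x ∈ (⨆ m : ℕ, (LinearMap.ker (adjoint T₂ : H →ₗ[ℂ] H)).map ((T₂ ^ m : H →L[ℂ] H) : H →ₗ[ℂ] H)).topologicalClosure) ∧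
    (∀ x ∈ (⨆ m : ℕ, (LinearMap.ker (adjoint T₂ : H →ₗ[ℂ] H)).map ((T₂ ^ m : H →L[ℂ] H) : H →ₗ[ℂ] H)).topologicalClosure,
        adjoint T₁ x ∈
          (⨆ m : ℕ, (LinearMap.ker (adjoint T₂ : H →ₗ[ℂ] H)).map ((T₂ ^ m : H →L[ℂ] H) : H →ₗ[ℂ] H)).topologicalClosure) := by
  have h₁₂ : Commute T₁ T₂ := hcomm
  have h₁₂' : Commute T₁ (adjoint T₂) := hdcomm
  have h₁'₂ : Commute (adjoint T₁) T₂ := by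
    simpa only [star_eq_adjoint, adjoint_adjoint] using h₁₂'.star_star
  have h₁'₂' : Commute (adjoint T₁) (adjoint T₂) := by
    simpa only [star_eq_adjoint] using h₁₂.star_star
  exact ⟨h₁₂.symm.apply_mem_iInf_range_pow, h₁₂'.symm.apply_mem_iInf_range_pow,
    h₁₂.symm.apply_mem_closure_iSup_map_pow_ker h₁'₂.symm,
    h₁₂'.symm.apply_mem_closure_iSup_map_pow_ker h₁'₂'.symm,
    h₁₂.apply_mem_iInf_range_pow, h₁'₂.apply_mem_iInf_range_pow,
    h₁₂.apply_mem_closure_iSup_map_pow_ker h₁₂',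
    h₁'₂.apply_mem_closure_iSup_map_pow_ker h₁'₂'⟩

/-- For a doubly commuting pair of 2-isometries `(T₁, T₂)`,
both `⋂ₘ T₁^m(H)` and the closed span of `⋃ₘ T₁^m(ker T₁*)` reduce `T₂`,
and symmetrically with `T₁` and `T₂` interchanged. -/
theorem doublyCommuting_twoIsometries_wold_pieces_reduce
    {H : Type*} [NormedAddCommGroup H] [InnerProductSpace ℂ H] [CompleteSpace H]
    (T₁ T₂ : H →L[ℂ] H)
    (h2iso₁ : ∀ h : H, ‖T₁ (T₁ h)‖ ^ 2 - 2 * ‖T₁ h‖ ^ 2 + ‖h‖ ^ 2 = 0)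
    (h2iso₂ : ∀ h : H, ‖T₂ (T₂ h)‖ ^ 2 - 2 * ‖T₂ h‖ ^ 2 + ‖h‖ ^ 2 = 0)
    (hcomm : T₁ ∘L T₂ = T₂ ∘L T₁)
    (hdcomm : T₁ ∘L adjoint T₂ = adjoint T₂ ∘L T₁) :
    (∀ x ∈ ⨅ m : ℕ, LinearMap.range ((T₁ ^ m : H →L[ℂ] H) : H →ₗ[ℂ] H),
        T₂ x ∈ ⨅ m : ℕ, LinearMap.range ((T₁ ^ m : H →L[ℂ] H) : H →ₗ[ℂ] H)) ∧
    (∀ x ∈ ⨅ m : ℕ, LinearMap.range ((T₁ ^ m : H →L[ℂ] H) : H →ₗ[ℂ] H),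
        adjoint T₂ x ∈ ⨅ m : ℕ, LinearMap.range ((T₁ ^ m : H →L[ℂ] H) : H →ₗ[ℂ] H)) ∧
    (∀ x ∈ (⨆ m : ℕ, (LinearMap.ker (adjoint T₁ : H →ₗ[ℂ] H)).map ((T₁ ^ m : H →L[ℂ] H) : H →ₗ[ℂ] H)).topologicalClosure,
        T₂ x ∈ (⨆ m : ℕ, (LinearMap.ker (adjoint T₁ : H →ₗ[ℂ] H)).map ((T₁ ^ m : H →L[ℂ] H) : H →ₗ[ℂ] H)).topologicalClosure) ∧
    (∀ x ∈ (⨆ m : ℕ, (LinearMap.ker (adjoint T₁ : H →ₗ[ℂ] H)).map ((T₁ ^ m : H →L[ℂ] H) : H →ₗ[ℂ] H)).topologicalClosure,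
        adjoint T₂ x ∈
          (⨆ m : ℕ, (LinearMap.ker (adjoint T₁ : H →ₗ[ℂ] H)).map ((T₁ ^ m : H →L[ℂ] H) : H →ₗ[ℂ] H)).topologicalClosure) ∧
    (∀ x ∈ ⨅ m : ℕ, LinearMap.range ((T₂ ^ m : H →L[ℂ] H) : H →ₗ[ℂ] H),
        T₁ x ∈ ⨅ m : ℕ, LinearMap.range ((T₂ ^ m : H →L[ℂ] H) : H →ₗ[ℂ] H)) ∧
    (∀ x ∈ ⨅ m : ℕ, LinearMap.range ((T₂ ^ m : H →L[ℂ] H) : H →ₗ[ℂ] H),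
        adjoint T₁ x ∈ ⨅ m : ℕ, LinearMap.range ((T₂ ^ m : H →L[ℂ] H) : H →ₗ[ℂ] H)) ∧
    (∀ x ∈ (⨆ m : ℕ, (LinearMap.ker (adjoint T₂ : H →ₗ[ℂ] H)).map ((T₂ ^ m : H →L[ℂ] H) : H →ₗ[ℂ] H)).topologicalClosure,
        T₁ x ∈ (⨆ m : ℕ, (LinearMap.ker (adjoint T₂ : H →ₗ[ℂ] H)).map ((T₂ ^ m : H →L[ℂ] H) : H →ₗ[ℂ] H)).topologicalClosure) ∧
    (∀ x ∈ (⨆ m : ℕ, (LinearMap.ker (adjoint T₂ : H →ₗ[ℂ] H)).map ((T₂ ^ m : H →L[ℂ] H) : H →ₗ[ℂ] H)).topologicalClosure,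
        adjoint T₁ x ∈
          (⨆ m : ℕ, (LinearMap.ker (adjoint T₂ : H →ₗ[ℂ] H)).map ((T₂ ^ m : H →L[ℂ] H) : H →ₗ[ℂ] H)).topologicalClosure) :=
  doublyCommuting_twoIsometries_wold_pieces_reduce_general T₁ T₂ hcomm hdcomm
end
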